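/- arXiv:1403.1270 — 2 statements merged into one kernel-verified Lean document; each statement's English description precedes it below -/
import Mathlib

section
/- If T_1, ..., T_q are 2x2 symplectic matrices (T_i* J T_i = J) depending differentiably on a real parameter E, and each satisfies T_i* J (dT_i/dE) > 0 (positive definite), then their product T = T_q ··· T_1 satisfies T* J (dT/dE) > 0. -/
/-!
Write `Tᴴ J T'` for the current of a transfer matrix `T` with derivative `T'`. If `A` preserves
`J` (`Aᴴ J A = J`), the Leibniz rule gives the cocycle identity
`(AB)ᴴ J (AB)' = Bᴴ (Aᴴ J A') B + Bᴴ J B'`.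
Congruence by `B` keeps the first summand positive semidefinite, so a positive definite current of
the right factor `B` makes the current of `AB` positive definite. Peeling off `T₁` as the right
factor and inducting on `q` proves the theorem.
-/

open Matrix
open scoped ComplexOrder

namespace Matrix

variable {𝕜 : Type*} [RCLike 𝕜] {m n p : Type*}

def HasEntrywiseDerivAt (f : ℝ → Matrix m n 𝕜) (f' : Matrix m n 𝕜) (x : ℝ) : Prop :=
  ∀ i j, HasDerivAt (fun t => f t i j) (f' i j) x

namespace HasEntrywiseDerivAt

variable {f : ℝ → Matrix m n 𝕜} {f' : Matrix m n 𝕜} {x : ℝ}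

theorem unique {f'' : Matrix m n 𝕜} (h : HasEntrywiseDerivAt f f' x)
    (h' : HasEntrywiseDerivAt f f'' x) : f' = f'' :=
  ext fun i j => (h i j).unique (h' i j)

theorem mul [Fintype n] {g : ℝ → Matrix n p 𝕜} {g' : Matrix n p 𝕜}
    (hf : HasEntrywiseDerivAt f f' x) (hg : HasEntrywiseDerivAt g g' x) :
    HasEntrywiseDerivAt (fun t => f t * g t) (f' * g x + f x * g') x := by
  intro i j
  simp only [mul_apply, add_apply, ← Finset.sum_add_distrib]
  exact HasDerivAt.fun_sum fun k _ => (hf i k).mul (hg k j)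

end HasEntrywiseDerivAt

variable [Fintype n] {J A A' B B' : Matrix n n 𝕜}

theorem conjTranspose_mul_mul_mul_of_conjTranspose_mul_mul_self
    (hA : Aᴴ * J * A = J) (hB : Bᴴ * J * B = J) : (A * B)ᴴ * J * (A * B) = J :=
  calc (A * B)ᴴ * J * (A * B) = Bᴴ * (Aᴴ * J * A) * B := by
        simp only [conjTranspose_mul, Matrix.mul_assoc]
    _ = J := by rw [hA, hB]

theorem conjTranspose_list_prod_mul_mul_self [DecidableEq n] {L : List (Matrix n n 𝕜)}
    (hL : ∀ A ∈ L, Aᴴ * J * A = J) : L.prodᴴ * J * L.prod = J :=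
  List.prod_induction (fun A => Aᴴ * J * A = J)
    (fun _ _ => conjTranspose_mul_mul_mul_of_conjTranspose_mul_mul_self) (by simp) hL

theorem conjTranspose_mul_mul_leibniz (hA : Aᴴ * J * A = J) :
    (A * B)ᴴ * J * (A' * B + A * B') = Bᴴ * (Aᴴ * J * A') * B + Bᴴ * J * B' :=
  calc (A * B)ᴴ * J * (A' * B + A * B')
      = Bᴴ * (Aᴴ * J * A') * B + Bᴴ * (Aᴴ * J * A) * B' := by
        simp only [conjTranspose_mul, Matrix.mul_add, Matrix.mul_assoc]
    _ = Bᴴ * (Aᴴ * J * A') * B + Bᴴ * J * B' := by rw [hA]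

theorem PosDef.conjTranspose_mul_mul_leibniz (hA : Aᴴ * J * A = J)
    (hA' : (Aᴴ * J * A').PosSemidef) (hB : (Bᴴ * J * B').PosDef) :
    ((A * B)ᴴ * J * (A' * B + A * B')).PosDef := by
  rw [Matrix.conjTranspose_mul_mul_leibniz hA]
  exact PosDef.posSemidef_add (hA'.conjTranspose_mul_mul_same B) hB

end Matrix

section TransferProduct

variable {𝕜 : Type*} [RCLike 𝕜] {n : Type*} [Fintype n] [DecidableEq n]

/-- `transferProduct T x = T (q-1) x * ⋯ * T 0 x`. -/
def transferProduct {q : ℕ} (T : Fin q → ℝ → Matrix n n 𝕜) (x : ℝ) : Matrix n n 𝕜 :=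
  (List.ofFn fun i => T i x).reverse.prod

theorem transferProduct_one (T : Fin 1 → ℝ → Matrix n n 𝕜) (x : ℝ) :
    transferProduct T x = T 0 x := by
  simp [transferProduct]

theorem transferProduct_succ {q : ℕ} (T : Fin (q + 1) → ℝ → Matrix n n 𝕜) (x : ℝ) :
    transferProduct T x = transferProduct (fun i => T i.succ) x * T 0 x := by
  simp [transferProduct, List.ofFn_succ]

theorem conjTranspose_transferProduct_mul_mul_self {q : ℕ} {J : Matrix n n 𝕜}
    {T : Fin q → ℝ → Matrix n n 𝕜} {x : ℝ} (hT : ∀ i, (T i x)ᴴ * J * T i x = J) :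
    (transferProduct T x)ᴴ * J * transferProduct T x = J :=
  conjTranspose_list_prod_mul_mul_self fun A hA => by
    obtain ⟨i, rfl⟩ := List.mem_ofFn.1 (List.mem_reverse.1 hA)
    exact hT i

theorem exists_hasEntrywiseDerivAt_transferProduct_posDef {J : Matrix n n 𝕜} {x : ℝ} :
    ∀ {q : ℕ} (T : Fin (q + 1) → ℝ → Matrix n n 𝕜) (D : Fin (q + 1) → Matrix n n 𝕜),
      (∀ i, HasEntrywiseDerivAt (T i) (D i) x) → (∀ i, (T i x)ᴴ * J * T i x = J) →
      (∀ i, ((T i x)ᴴ * J * D i).PosDef) →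
      ∃ P', HasEntrywiseDerivAt (transferProduct T) P' x ∧
        ((transferProduct T x)ᴴ * J * P').PosDef
  | 0, T, D, hD, _, hpos => by
    rw [show transferProduct T = T 0 from funext (transferProduct_one T)]
    exact ⟨D 0, hD 0, hpos 0⟩
  | _ + 1, T, D, hD, hsymp, hpos => by
    obtain ⟨Q', hQ', hQpos⟩ := exists_hasEntrywiseDerivAt_transferProduct_posDef
      (fun i => T i.succ) (fun i => D i.succ) (fun i => hD i.succ) (fun i => hsymp i.succ)
      (fun i => hpos i.succ)
    have hsplit : transferProduct T = fun t => transferProduct (fun i => T i.succ) t * T 0 t :=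
      funext (transferProduct_succ T)
    refine ⟨_, hsplit ▸ hQ'.mul (hD 0), ?_⟩
    rw [hsplit]
    exact PosDef.conjTranspose_mul_mul_leibniz
      (conjTranspose_transferProduct_mul_mul_self fun i => hsymp i.succ) hQpos.posSemidef (hpos 0)

end TransferProduct

theorem product_current_positivity_general (q : ℕ) (hq : 0 < q)
    (J : Matrix (Fin 2) (Fin 2) ℂ)
    (T D : Fin q → ℝ → Matrix (Fin 2) (Fin 2) ℂ)
    (hD : ∀ (i : Fin q) (E : ℝ) (a b : Fin 2),
      HasDerivAt (fun x : ℝ => T i x a b) (D i E a b) E)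
    (hsymp : ∀ (i : Fin q) (E : ℝ), (T i E)ᴴ * J * T i E = J)
    (hpos : ∀ (i : Fin q) (E : ℝ), ((T i E)ᴴ * J * D i E).PosDef)
    (P : ℝ → Matrix (Fin 2) (Fin 2) ℂ)
    (hP : ∀ E : ℝ, P E = ((List.ofFn fun i : Fin q => T i E).reverse).prod)
    (E : ℝ) (DP : Matrix (Fin 2) (Fin 2) ℂ)
    (hDP : ∀ a b : Fin 2, HasDerivAt (fun x : ℝ => P x a b) (DP a b) E) :
    ((P E)ᴴ * J * DP).PosDef := by
  obtain ⟨k, rfl⟩ := Nat.exists_eq_add_one_of_ne_zero hq.ne'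
  obtain rfl : P = transferProduct T := funext hP
  obtain ⟨P', hP', hP'pos⟩ := exists_hasEntrywiseDerivAt_transferProduct_posDef T
    (fun i => D i E) (fun i => hD i E) (fun i => hsymp i E) (fun i => hpos i E)
  rwa [HasEntrywiseDerivAt.unique hDP hP']

theorem product_current_positivity (q : ℕ) (hq : 0 < q)
    (J : Matrix (Fin 2) (Fin 2) ℂ) (hJ : J = !![0, -1; 1, 0])
    (T D : Fin q → ℝ → Matrix (Fin 2) (Fin 2) ℂ)
    (hD : ∀ (i : Fin q) (E : ℝ) (a b : Fin 2),
      HasDerivAt (fun x : ℝ => T i x a b) (D i E a b) E)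
    (hsymp : ∀ (i : Fin q) (E : ℝ), (T i E)ᴴ * J * T i E = J)
    (hpos : ∀ (i : Fin q) (E : ℝ), ((T i E)ᴴ * J * D i E).PosDef)
    (P : ℝ → Matrix (Fin 2) (Fin 2) ℂ)
    (hP : ∀ E : ℝ, P E = ((List.ofFn fun i : Fin q => T i E).reverse).prod)
    (E : ℝ) (DP : Matrix (Fin 2) (Fin 2) ℂ)
    (hDP : ∀ a b : Fin 2, HasDerivAt (fun x : ℝ => P x a b) (DP a b) E) :
    ((P E)ᴴ * J * DP).PosDef :=
  product_current_positivity_general q hq J T D hD hsymp hpos P hP E DP hDP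
end

section
/- Suppose T(E) is a differentiable family of 2x2 matrices with T* J T = J and T* J (dT/dE) positive definite, and Ω(E) is a differentiable family of real unit eigenvectors with eigenvalue λ(E), |λ(E)| < 1. Then Ω* T* J (dT/dE) Ω + (1 - |λ|²) Ω* J (dΩ/dE) = 0, and consequently Ω* J (dΩ/dE) < 0. -/
open Matrix
open scoped ComplexOrder

section Algebra

variable {n R : Type*} [Fintype n] [CommRing R]

theorem dotProduct_mulVec_J_self (v : Fin 2 → R) : v ⬝ᵥ !![0, -1; 1, 0] *ᵥ v = 0 := by
  simp only [dotProduct, mulVec, Fin.sum_univ_two, of_apply, cons_val', cons_val_zero,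
    cons_val_one, empty_val', cons_val_fin_one]
  ring

variable [StarRing R]

theorem vecMul_conjTranspose_of_mulVec_eq_smul {T : Matrix n n R} {v : n → R} {l : R}
    (hv : star v = v) (heig : T *ᵥ v = l • v) : v ᵥ* Tᴴ = star l • v := by
  rw [vecMul_conjTranspose, hv, heig, star_smul, hv]

/-- Pairing the differentiated eigen-equation `T' v + T v' = D v + l v'` with the covector
`vᵀ Tᴴ J = conj l · vᵀ J`: the `D`-term drops out because `vᵀ J v = 0`, and `Tᴴ J T = J` turns
`vᵀ Tᴴ J T v'` into `vᵀ J v'`. -/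
theorem eigenvector_derivative_identity {T T' J : Matrix n n R} {v v' : n → R} {l D : R}
    (hsymp : Tᴴ * J * T = J) (hv : star v = v) (heig : T *ᵥ v = l • v)
    (hJv : v ⬝ᵥ J *ᵥ v = 0) (hder : T' *ᵥ v + T *ᵥ v' = D • v + l • v') :
    v ⬝ᵥ (Tᴴ * J * T') *ᵥ v + (1 - l * star l) * (v ⬝ᵥ J *ᵥ v') = 0 := by
  have hu : v ᵥ* (Tᴴ * J) = star l • (v ᵥ* J) := by
    rw [← vecMul_vecMul, vecMul_conjTranspose_of_mulVec_eq_smul hv heig, smul_vecMul]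
  set u := v ᵥ* (Tᴴ * J)
  have hT' : u ⬝ᵥ T' *ᵥ v = v ⬝ᵥ (Tᴴ * J * T') *ᵥ v := by
    rw [dotProduct_mulVec, dotProduct_mulVec, vecMul_vecMul]
  have hT : u ⬝ᵥ T *ᵥ v' = v ⬝ᵥ J *ᵥ v' := by
    rw [dotProduct_mulVec, vecMul_vecMul, hsymp, ← dotProduct_mulVec]
  have hu_v : u ⬝ᵥ v = 0 := by
    rw [hu, smul_dotProduct, ← dotProduct_mulVec, hJv, smul_zero]
  have hu_v' : u ⬝ᵥ v' = star l * (v ⬝ᵥ J *ᵥ v') := by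
    rw [hu, smul_dotProduct, ← dotProduct_mulVec, smul_eq_mul]
  have h := congrArg (u ⬝ᵥ ·) hder
  simp only [dotProduct_add, dotProduct_smul, smul_eq_mul, hT', hT, hu_v, hu_v'] at h
  linear_combination h

end Algebra

section Calculus

variable {𝕜 𝔸 : Type*} [NontriviallyNormedField 𝕜] [NormedCommRing 𝔸] [NormedAlgebra 𝕜 𝔸]
  {m n : Type*} [Fintype n]

theorem hasDerivAt_mulVec_apply {T : 𝕜 → Matrix m n 𝔸} {T' : Matrix m n 𝔸} {v : 𝕜 → n → 𝔸}
    {v' : n → 𝔸} {x : 𝕜} (hT : ∀ i j, HasDerivAt (fun y => T y i j) (T' i j) x)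
    (hv : ∀ j, HasDerivAt (fun y => v y j) (v' j) x) (i : m) :
    HasDerivAt (fun y => (T y *ᵥ v y) i) ((T' *ᵥ v x + T x *ᵥ v') i) x := by
  simp only [mulVec, dotProduct, Pi.add_apply, ← Finset.sum_add_distrib]
  exact HasDerivAt.fun_sum fun j _ => (hT i j).mul (hv j)

theorem hasDerivAt_of_mul_eq {𝕜' : Type*} [NontriviallyNormedField 𝕜'] [NormedAlgebra 𝕜 𝕜']
    {f g lam : 𝕜 → 𝕜'} {f' g' : 𝕜'} {x : 𝕜} (hf : HasDerivAt f f' x) (hg : HasDerivAt g g' x)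
    (hgx : g x ≠ 0) (h : ∀ y, f y = lam y * g y) :
    HasDerivAt lam ((f' * g x - f x * g') / g x ^ 2) x := by
  have hlam : lam =ᶠ[nhds x] fun y => f y / g y :=
    (hg.continuousAt.eventually_ne hgx).mono fun y hy => by
      show lam y = f y / g y
      rw [h y, mul_div_cancel_right₀ _ hy]
  exact (hf.div hg hgx).congr_of_eventuallyEq hlam

/-- The eigenvalue need not be assumed differentiable: near a nonzero coordinate of `v x` it is a
quotient of differentiable coordinates. -/
theorem exists_mulVec_derivative_eq_smul_add_smul {𝕜' : Type*} [NontriviallyNormedField 𝕜']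
    [NormedAlgebra 𝕜 𝕜'] {T : 𝕜 → Matrix n n 𝕜'} {T' : Matrix n n 𝕜'} {v : 𝕜 → n → 𝕜'}
    {v' : n → 𝕜'} {lam : 𝕜 → 𝕜'} {x : 𝕜}
    (hT : ∀ i j, HasDerivAt (fun y => T y i j) (T' i j) x)
    (hv : ∀ j, HasDerivAt (fun y => v y j) (v' j) x)
    (heig : ∀ y, T y *ᵥ v y = lam y • v y) (hvx : v x ≠ 0) :
    ∃ D : 𝕜', T' *ᵥ v x + T x *ᵥ v' = D • v x + lam x • v' := by
  obtain ⟨i₀, hi₀⟩ := Function.ne_iff.mp hvx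
  have heig_apply : ∀ i, (fun y => (T y *ᵥ v y) i) = fun y => lam y * v y i :=
    fun i => funext fun y => by rw [heig y, Pi.smul_apply, smul_eq_mul]
  obtain ⟨D, hlam⟩ : ∃ D, HasDerivAt lam D x :=
    ⟨_, hasDerivAt_of_mul_eq (hasDerivAt_mulVec_apply hT hv i₀) (hv i₀) hi₀
      (congrFun (heig_apply i₀))⟩
  refine ⟨D, funext fun i => ?_⟩
  have hi := hasDerivAt_mulVec_apply hT hv i
  rw [heig_apply i] at hi
  simpa using hi.unique (hlam.mul (hv i))

end Calculus

theorem eigenvector_winding_negative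
    (J : Matrix (Fin 2) (Fin 2) ℂ) (hJ : J = !![0, -1; 1, 0])
    (Jr : Matrix (Fin 2) (Fin 2) ℝ) (hJr : Jr = !![0, -1; 1, 0])
    (T DT : ℝ → Matrix (Fin 2) (Fin 2) ℂ)
    (hDT : ∀ (E : ℝ) (a b : Fin 2), HasDerivAt (fun x : ℝ => T x a b) (DT E a b) E)
    (hsymp : ∀ E : ℝ, (T E)ᴴ * J * T E = J)
    (hpos : ∀ E : ℝ, ((T E)ᴴ * J * DT E).PosDef)
    (Omega DOmega : ℝ → Fin 2 → ℝ)
    (hDOm : ∀ (E : ℝ) (i : Fin 2), HasDerivAt (fun x : ℝ => Omega x i) (DOmega E i) E)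
    (hunit : ∀ E : ℝ, Omega E ⬝ᵥ Omega E = 1)
    (lam : ℝ → ℂ)
    (heig : ∀ E : ℝ, (T E).mulVec (fun i => (Omega E i : ℂ)) =
      lam E • (fun i => (Omega E i : ℂ)))
    (hcontr : ∀ E : ℝ, ‖lam E‖ < 1)
    (E : ℝ) :
    (fun i => (Omega E i : ℂ)) ⬝ᵥ ((T E)ᴴ * J * DT E).mulVec (fun i => (Omega E i : ℂ)) +
        (1 - (‖lam E‖ : ℂ)^2) *
          ((fun i => (Omega E i : ℂ)) ⬝ᵥ J.mulVec (fun i => (DOmega E i : ℂ))) = 0 ∧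
    Omega E ⬝ᵥ Jr.mulVec (DOmega E) < 0 := by
  set v : Fin 2 → ℂ := fun i => (Omega E i : ℂ)
  have hv_ne : v ≠ 0 := fun h => by
    have := hunit E
    simp_all [v, funext_iff, dotProduct, Fin.sum_univ_two]
  have hv_real : star v = v := funext fun i => Complex.conj_ofReal _
  obtain ⟨D, hder⟩ := exists_mulVec_derivative_eq_smul_add_smul (hDT E)
    (fun i => (hDOm E i).ofReal_comp) heig hv_ne
  have hnorm : (‖lam E‖ : ℂ) ^ 2 = lam E * star (lam E) := by
    rw [← Complex.mul_conj', RCLike.star_def]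
  have hidentity : v ⬝ᵥ ((T E)ᴴ * J * DT E) *ᵥ v + (1 - (‖lam E‖ : ℂ) ^ 2) *
      (v ⬝ᵥ J *ᵥ fun i => (DOmega E i : ℂ)) = 0 := by
    rw [hnorm]
    exact eigenvector_derivative_identity (hsymp E) hv_real (heig E)
      (hJ ▸ dotProduct_mulVec_J_self v) hder
  refine ⟨hidentity, ?_⟩
  have hwinding : (v ⬝ᵥ J *ᵥ fun i => (DOmega E i : ℂ)) = (Omega E ⬝ᵥ Jr *ᵥ DOmega E : ℝ) := by
    simp [v, hJ, hJr, mulVec, dotProduct, Fin.sum_univ_two]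
  have hquad := (hpos E).dotProduct_mulVec_pos hv_ne
  rw [hv_real, eq_neg_of_add_eq_zero_left hidentity, hwinding, ← Complex.ofReal_pow,
    ← Complex.ofReal_one, ← Complex.ofReal_sub, ← Complex.ofReal_mul, ← Complex.ofReal_neg,
    Complex.zero_lt_real] at hquad
  have hcontr_sq : 0 ≤ 1 - ‖lam E‖ ^ 2 :=
    sub_nonneg.2 (pow_le_one₀ (norm_nonneg _) (hcontr E).le)
  exact neg_of_mul_neg_right (neg_pos.mp hquad) hcontr_sq
end
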